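/- If P is a safety property (in the sense of Alpern–Schneider), then P is a relative liveness property of L_ω if and only if L_ω ⊆ P. -/
import Mathlib


/-- The length-`n` prefix of an ω-word. -/
def ωtake {α : Type*} (x : ℕ → α) (n : ℕ) : List α := List.ofFn (fun i : Fin n => x i)

/-- Concatenation of a finite word with an ω-word. -/
def ωcat {α : Type*} (w : List α) (x : ℕ → α) : ℕ → α :=
  fun n => if h : n < w.length then w.get ⟨n, h⟩ else x (n - w.length)

/-- The set of finite prefixes of ω-words in `L`. -/
def Pre {α : Type*} (L : Set (ℕ → α)) : Set (List α) := {w | ∃ x ∈ L, ∃ n, w = ωtake x n}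

/-- Eilenberg limit: ω-words with infinitely many prefixes in `M`. -/
def Lim {α : Type*} (M : Set (List α)) : Set (ℕ → α) := {x | {n | ωtake x n ∈ M}.Infinite}

/-- `P` is a relative liveness property of `L`. -/
def RelLive {α : Type*} (P L : Set (ℕ → α)) : Prop :=
  ∀ w ∈ Pre L, ∃ x : ℕ → α, ωcat w x ∈ L ∧ ωcat w x ∈ P

/-- `P` is a relative safety property of `L`. -/
def RelSafe {α : Type*} (P L : Set (ℕ → α)) : Prop :=
  ∀ x ∈ L, x ∉ P → ∃ n : ℕ, ∀ z : ℕ → α, ωcat (ωtake x n) z ∈ L → ωcat (ωtake x n) z ∉ P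

/-- Alpern–Schneider safety property. -/
def Safety {α : Type*} (P : Set (ℕ → α)) : Prop :=
  ∀ x : ℕ → α, x ∉ P → ∃ n : ℕ, ∀ y : ℕ → α, ωcat (ωtake x n) y ∉ P


lemma ωtake_length {α : Type*} (x : ℕ → α) (n : ℕ) : (ωtake x n).length = n := by
  simp [ωtake]

lemma ωcat_ωtake {α : Type*} (y : ℕ → α) (n : ℕ) :
    ωcat (ωtake y n) (fun k => y (k + n)) = y := by
  funext m
  simp only [ωcat, ωtake, List.length_ofFn, List.get_ofFn]
  split
  · simp
  · congr 1; omega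

theorem safety_relLive_iff_sat {α : Type*} (P L : Set (ℕ → α)) (hP : Safety P) :
    Pre L = Pre (L ∩ P) ↔ L ⊆ P := by
  constructor
  · intro h x hx
    by_contra hxP
    obtain ⟨n, hn⟩ := hP x hxP
    have hw : ωtake x n ∈ Pre (L ∩ P) := by
      rw [← h]; exact ⟨x, hx, n, rfl⟩
    obtain ⟨y, hy, m, hm⟩ := hw
    have hmn : m = n := by
      have := congrArg List.length hm
      simpa [ωtake_length] using this.symm
    subst hmn
    have := hn (fun k => y (k + m))
    rw [hm, ωcat_ωtake] at this
    exact this hy.2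
  · intro h
    have : L ∩ P = L := Set.inter_eq_left.mpr h
    rw [this]
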